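/- Derivability of corresponding grounding trees: if a grounding tree t corresponds to some grounding derivation, then TDer t holds, i.e., t is derivable from grounding rule instances by the ▷-introduction rules. -/

import Mathlib

inductive DTree (α : Type*) : Type _ where
  | leaf (a : α)
  | node (a : α) (gchildren cchildren : List (DTree α))

namespace DTree
variable {α : Type*}

def label : DTree α → α
  | .leaf a => a
  | .node a _ _ => a

def isLeaf : DTree α → Prop
  | .leaf _ => True
  | .node _ _ _ => False

end DTree

inductive DValid {α : Type*} (R : List α → List α → α → Prop) : DTree α → Prop where
  | leaf (a : α) : DValid R (.leaf a)
  | node (a : α) (gs cs : List (DTree α)) :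
      R (gs.map DTree.label) (cs.map DTree.label) a →
      (∀ t ∈ gs, DValid R t) → (∀ t ∈ cs, DValid R t) →
      DValid R (.node a gs cs)

/-- A grounding derivation for the immediate grounding relation `R`. -/
structure GDeriv {α : Type*} (R : List α → List α → α → Prop) where
  tree : DTree α
  valid : DValid R tree
  nonleaf : ¬ tree.isLeaf

inductive GTree (α : Type*) : Type _ where
  | mk (grounds : List (α ⊕ GTree α)) (conds : List (α ⊕ GTree α)) (concl : α)

namespace GTree
variable {α : Type*}

def concl : GTree α → α
  | .mk _ _ b => b

end GTree

universe u

mutual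
/-- Correspondence between grounding trees and grounding derivations. -/
inductive Corr {α : Type u} : GTree α → DTree α → Prop where
  | mk {G C : List (α ⊕ GTree α)} {B : α} {gs cs : List (DTree α)} :
      CorrList G gs → CorrList C cs → Corr (.mk G C B) (.node B gs cs)

/-- Entry-by-entry correspondence between a list of grounding-tree entries and a list
of child subderivations: a plain entry `Sum.inl a` matches a leaf labelled `a`, and a
subtree entry `Sum.inr s` matches a non-leaf child whose subderivation corresponds to `s`. -/
inductive CorrList {α : Type u} : List (α ⊕ GTree α) → List (DTree α) → Prop where
  | nil : CorrList [] []
  | consFm {a : α} {G : List (α ⊕ GTree α)} {gs : List (DTree α)} :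
      CorrList G gs → CorrList (Sum.inl a :: G) (DTree.leaf a :: gs)
  | consTr {s : GTree α} {t : DTree α} {G : List (α ⊕ GTree α)} {gs : List (DTree α)} :
      Corr s t → ¬ t.isLeaf → CorrList G gs → CorrList (Sum.inr s :: G) (t :: gs)
end

/-- Derivability of grounding trees from grounding rule instances by the
▷-introduction rules. -/
inductive TDer {α : Type*} (R : List α → List α → α → Prop) : GTree α → Prop where
  | base {Γ Δ : List α} {B : α} :
      R Γ Δ B → TDer R (.mk (Γ.map Sum.inl) (Δ.map Sum.inl) B)
  | introG {s : GTree α} {Γ₁ Γ₂ Ξ : List (α ⊕ GTree α)} {B : α} :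
      TDer R s → TDer R (.mk (Γ₁ ++ [Sum.inl s.concl] ++ Γ₂) Ξ B) →
      TDer R (.mk (Γ₁ ++ [Sum.inr s] ++ Γ₂) Ξ B)
  | introC {s : GTree α} {Γ Ξ₁ Ξ₂ : List (α ⊕ GTree α)} {B : α} :
      TDer R s → TDer R (.mk Γ (Ξ₁ ++ [Sum.inl s.concl] ++ Ξ₂) B) →
      TDer R (.mk Γ (Ξ₁ ++ [Sum.inr s] ++ Ξ₂) B)

namespace TderAux

variable {α : Type*}

/-- Flatten a subtree entry to its conclusion. -/
def toInl : (α ⊕ GTree α) → (α ⊕ GTree α)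
  | Sum.inl a => Sum.inl a
  | Sum.inr s => Sum.inl s.concl

lemma corr_concl {s : GTree α} {t : DTree α} (h : Corr s t) : s.concl = t.label := by
  cases h; rfl

lemma corrList_map {G : List (α ⊕ GTree α)} {gs : List (DTree α)}
    (h : CorrList G gs) : G.map toInl = (gs.map DTree.label).map Sum.inl := by
  induction G generalizing gs with
  | nil => cases h; rfl
  | cons x G ih =>
    cases h with
    | consFm h' => simp [toInl, ih h', DTree.label]
    | consTr hc _ h' => simp [toInl, ih h', corr_concl hc]

lemma corrList_mem {G : List (α ⊕ GTree α)} {gs : List (DTree α)}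
    (h : CorrList G gs) {s : GTree α} (hs : Sum.inr s ∈ G) :
    ∃ t ∈ gs, Corr s t := by
  induction G generalizing gs with
  | nil => simp at hs
  | cons x G ih =>
    cases h with
    | consFm h' =>
      rcases List.mem_cons.1 hs with h'' | h''
      · exact absurd h'' (by simp)
      · obtain ⟨t, ht, hc⟩ := ih h' h''; exact ⟨t, List.mem_cons_of_mem _ ht, hc⟩
    | @consTr s' t' _ _ hc _ h' =>
      rcases List.mem_cons.1 hs with h'' | h''
      · exact ⟨t', List.mem_cons_self, by cases Sum.inr.inj h''; exact hc⟩
      · obtain ⟨t, ht, hc'⟩ := ih h' h''; exact ⟨t, List.mem_cons_of_mem _ ht, hc'⟩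

lemma stepG (R : List α → List α → α → Prop) {B : α} {Ξ : List (α ⊕ GTree α)} :
    ∀ (Γ₂ Γ₁ : List (α ⊕ GTree α)),
      (∀ s : GTree α, Sum.inr s ∈ Γ₂ → TDer R s) →
      TDer R (.mk (Γ₁ ++ Γ₂.map toInl) Ξ B) → TDer R (.mk (Γ₁ ++ Γ₂) Ξ B) := by
  intro Γ₂
  induction Γ₂ with
  | nil => intro Γ₁ _ h; simpa using h
  | cons x Γ₂ ih =>
    intro Γ₁ hs h
    cases x with
    | inl a =>
      have := ih (Γ₁ ++ [Sum.inl a]) (fun s hs' => hs s (List.mem_cons_of_mem _ hs'))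
        (by simpa [toInl] using h)
      simpa using this
    | inr s =>
      have hTs : TDer R s := hs s (List.mem_cons_self)
      have := ih (Γ₁ ++ [Sum.inl s.concl]) (fun s hs' => hs s (List.mem_cons_of_mem _ hs'))
        (by simpa [toInl] using h)
      have := TDer.introG hTs (by simpa using this)
      simpa using this

lemma stepC (R : List α → List α → α → Prop) {B : α} {Γ : List (α ⊕ GTree α)} :
    ∀ (Ξ₂ Ξ₁ : List (α ⊕ GTree α)),
      (∀ s : GTree α, Sum.inr s ∈ Ξ₂ → TDer R s) →
      TDer R (.mk Γ (Ξ₁ ++ Ξ₂.map toInl) B) → TDer R (.mk Γ (Ξ₁ ++ Ξ₂) B) := by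
  intro Ξ₂
  induction Ξ₂ with
  | nil => intro Ξ₁ _ h; simpa using h
  | cons x Ξ₂ ih =>
    intro Ξ₁ hs h
    cases x with
    | inl a =>
      have := ih (Ξ₁ ++ [Sum.inl a]) (fun s hs' => hs s (List.mem_cons_of_mem _ hs'))
        (by simpa [toInl] using h)
      simpa using this
    | inr s =>
      have hTs : TDer R s := hs s (List.mem_cons_self)
      have := ih (Ξ₁ ++ [Sum.inl s.concl]) (fun s hs' => hs s (List.mem_cons_of_mem _ hs'))
        (by simpa [toInl] using h)
      have := TDer.introC hTs (by simpa using this)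
      simpa using this

lemma main {R : List α → List α → α → Prop} {d : DTree α} (hv : DValid R d) :
    ∀ s : GTree α, Corr s d → TDer R s := by
  induction hv with
  | leaf a => intro s hs; cases hs
  | node a gs cs hR _ _ ihg ihc =>
    intro s hs
    cases hs with
    | @mk G C B _ _ hG hC =>
      have hbase : TDer R (.mk (G.map toInl) (C.map toInl) a) := by
        rw [corrList_map hG, corrList_map hC]
        exact TDer.base hR
      have h1 : TDer R (.mk (G.map toInl) C a) := by
        have := stepC R C [] (fun s' hs' => by
          obtain ⟨t, ht, hc⟩ := corrList_mem hC hs'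
          exact ihc t ht s' hc) (by simpa using hbase)
        simpa using this
      have := stepG R G [] (fun s' hs' => by
        obtain ⟨t, ht, hc⟩ := corrList_mem hG hs'
        exact ihg t ht s' hc) (by simpa using h1)
      simpa using this

end TderAux

theorem tder_of_corresponds {α : Type*} (R : List α → List α → α → Prop)
    (t : GTree α) (h : ∃ d : GDeriv R, Corr t d.tree) : TDer R t := by
  obtain ⟨d, hd⟩ := h
  exact TderAux.main d.valid t hd
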